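/- arXiv:2001.11815 — 3 statements merged into one kernel-verified Lean document; each statement's English description precedes it below -/
import Mathlib

section
/- Let N, R be positive integers with R ≤ N+1, let a ∈ ℂ^R with a_r ≠ 0 for every r, and let z ∈ ℂ^R have pairwise distinct nonzero entries. Define x ∈ ℂ^{2N+1} by x_n = Σ_{r=1}^R a_r z_r^n for n = 0, …, 2N. Then the (N+1)×(N+1) Hankel matrix Rx with entries (Rx)_{i,j} = x_{i+j} has rank exactly R. -/
open Finset Matrix

/-- The Hankel operator: sends `x ∈ ℂ^{2N+1}` to the `(N+1)×(N+1)` matrix with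
entries `(Rx)_{i,j} = x_{i+j}`. -/
def hankelOp (N : ℕ) (x : Fin (2 * N + 1) → ℂ) :
    Matrix (Fin (N + 1)) (Fin (N + 1)) ℂ :=
  Matrix.of fun i j =>
    x ⟨(i : ℕ) + (j : ℕ), by have := i.isLt; have := j.isLt; omega⟩

/-- for `R ≤ N+1`, nonzero amplitudes and pairwise distinct nonzero
nodes, the Hankel matrix of the exponential signal has rank exactly `R`. -/
theorem hankel_rank_eq (N R : ℕ) (hN : 0 < N) (hR : 0 < R) (hRN : R ≤ N + 1)
    (a z : Fin R → ℂ)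
    (ha : ∀ r, a r ≠ 0)
    (hz : ∀ r, z r ≠ 0)
    (hz' : Function.Injective z)
    (x : Fin (2 * N + 1) → ℂ)
    (hx : ∀ n : Fin (2 * N + 1), x n = ∑ r : Fin R, a r * z r ^ (n : ℕ)) :
    (hankelOp N x).rank = R := by
  set M := hankelOp N x with hMdef
  have hMentry : ∀ i j : Fin (N + 1), M i j = ∑ r : Fin R, a r * z r ^ ((i : ℕ) + (j : ℕ)) := by
    intro i j
    simp [hMdef, hankelOp, hx]
  set f : Fin R → Fin (N + 1) := Fin.castLE hRN with hf
  -- upper bound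
  have hupper : M.rank ≤ R := by
    set P : Matrix (Fin (N + 1)) (Fin R) ℂ := Matrix.of fun i r => a r * z r ^ (i : ℕ)
    set Q : Matrix (Fin R) (Fin (N + 1)) ℂ := Matrix.of fun r j => z r ^ (j : ℕ)
    have hPQ : M = P * Q := by
      ext i j
      rw [hMentry, Matrix.mul_apply]
      refine Finset.sum_congr rfl fun r _ => ?_
      simp [P, Q, pow_add, mul_assoc]
    calc M.rank = (P * Q).rank := by rw [hPQ]
      _ ≤ Q.rank := Matrix.rank_mul_le_right P Q
      _ ≤ Fintype.card (Fin R) := Q.rank_le_card_height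
      _ = R := Fintype.card_fin R
  -- lower bound
  set S : Matrix (Fin R) (Fin R) ℂ := M.submatrix f f with hS
  have hSval : S = (Matrix.vandermonde z)ᵀ * (Matrix.diagonal a * Matrix.vandermonde z) := by
    ext p q
    rw [Matrix.mul_apply]
    simp only [hS, Matrix.submatrix_apply, hMentry]
    refine Finset.sum_congr rfl fun r _ => ?_
    simp [Matrix.mul_apply, Matrix.diagonal, Matrix.vandermonde, pow_add, f]
    ring
  have hdet : S.det ≠ 0 := by
    rw [hSval, Matrix.det_mul, Matrix.det_mul, Matrix.det_transpose, Matrix.det_diagonal]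
    have hv : (Matrix.vandermonde z).det ≠ 0 := by
      rw [Matrix.det_vandermonde_ne_zero_iff]
      exact hz'
    exact mul_ne_zero hv (mul_ne_zero (Finset.prod_ne_zero_iff.2 fun r _ => ha r) hv)
  have hSrank : S.rank = R := by
    rw [Matrix.rank_of_isUnit S ((Matrix.isUnit_iff_isUnit_det S).2 (isUnit_iff_ne_zero.2 hdet))]
    exact Fintype.card_fin R
  have hlower : R ≤ M.rank := by
    set E : Matrix (Fin R) (Fin (N + 1)) ℂ := Matrix.of fun p i => if f p = i then 1 else 0 with hE
    have hEM : S = E * (M * Eᵀ) := by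
      ext p q
      simp only [Matrix.mul_apply, hE, Matrix.of_apply, Matrix.transpose_apply, ite_mul, one_mul,
        zero_mul, mul_ite, mul_one, mul_zero]
      rw [Finset.sum_ite_eq Finset.univ (f p)]
      simp [hS]
    calc R = S.rank := hSrank.symm
      _ = (E * (M * Eᵀ)).rank := by rw [hEM]
      _ ≤ (M * Eᵀ).rank := Matrix.rank_mul_le_right _ _
      _ ≤ M.rank := Matrix.rank_mul_le_left _ _
  omega
end

section
/- Let N be a positive integer and let w ∈ ℝ^{2N+1} have entries w_k = min(k+1, 2N+1−k) for k = 0, …, 2N. Then the maximum of the windowed sums Σ_{k=i}^{i+N} w_k^{-2} over 0 ≤ i ≤ N is attained at i = 0 (and at i = N), and its value is C_w = Σ_{j=1}^{N+1} 1/j². In particular, C_w < π²/6. -/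
open Finset

/-- The weights `w_k = min(k+1, 2N+1-k)`, i.e. `w = (1,2,…,N+1,N,…,2,1)`. -/
noncomputable def wt (N k : ℕ) : ℝ :=
  min ((k : ℝ) + 1) (2 * (N : ℝ) + 1 - (k : ℝ))

/-- `C_w = max_{0 ≤ i ≤ N} ∑_{k=i}^{i+N} w_k⁻²`. -/
noncomputable def Cw (N : ℕ) : ℝ :=
  (Finset.range (N + 1)).sup' Finset.nonempty_range_add_one
    fun i => ∑ k ∈ Finset.Icc i (i + N), ((wt N k)⁻¹) ^ 2

/-!
Passing from the window `[0, N]` to `[i, N + i]` drops `w_0, …, w_{i-1}` and adds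
`w_{N+1}, …, w_{N+i}`. Pairing the added `w_{N+i-k}` with the dropped `w_k` (`k < i`) gives
`w_{N+i-k} = N + 1 - i + k ≥ k + 1 = w_k`, so no window sum of `w⁻²` exceeds the first one.
The symmetry `w_{2N-k} = w_k` makes the last window equal to the first, and the first window
has weights `1, …, N + 1`, so its sum is a partial sum of `ζ(2) = π²/6` with positive terms.
-/

namespace Finset

variable {M : Type*} [AddCommMonoid M]

theorem sum_Icc_const_sub (f : ℕ → M) {a b c : ℕ} (hab : a ≤ b) (hbc : b ≤ c) :
    ∑ k ∈ Icc a b, f (c - k) = ∑ k ∈ Icc (c - b) (c - a), f k :=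
  sum_nbij' (c - ·) (c - ·) (fun k hk => by simp only [mem_Icc] at hk ⊢; omega)
    (fun k hk => by simp only [mem_Icc] at hk ⊢; omega)
    (fun k hk => by simp only [mem_Icc] at hk; omega)
    (fun k hk => by simp only [mem_Icc] at hk; omega) fun _ _ => rfl

theorem sum_Icc_add_one (f : ℕ → M) (a b : ℕ) :
    ∑ k ∈ Icc a b, f (k + 1) = ∑ k ∈ Icc (a + 1) (b + 1), f k := by
  rw [← map_add_right_Icc, sum_map]
  rfl

/-- `h` compares each term `f (m + (i - 1 - k))` gained by the shift with the term `f k` lost. -/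
theorem sum_Ico_add_le_sum_range [PartialOrder M] [IsOrderedAddMonoid M] {f : ℕ → M} {i m : ℕ}
    (hi : i ≤ m) (h : ∀ k < i, f (m + (i - 1 - k)) ≤ f k) :
    ∑ k ∈ Ico i (i + m), f k ≤ ∑ k ∈ range m, f k := by
  have gained_le_lost : ∑ k ∈ Ico m (m + i), f k ≤ ∑ k ∈ range i, f k := by
    rw [sum_Ico_eq_sum_range, Nat.add_sub_cancel_left, ← sum_range_reflect]
    exact sum_le_sum fun k hk => h k (mem_range.1 hk)
  rw [add_comm i m, ← sum_Ico_consecutive f hi (Nat.le_add_right m i),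
    ← sum_range_add_sum_Ico f hi, add_comm (∑ k ∈ range i, f k)]
  exact add_le_add le_rfl gained_le_lost

end Finset

theorem wt_of_le {N k : ℕ} (hk : k ≤ N) : wt N k = k + 1 := by
  have : (k : ℝ) ≤ N := by exact_mod_cast hk
  exact min_eq_left (by linarith)

theorem wt_of_ge {N k : ℕ} (hk : N ≤ k) : wt N k = 2 * N + 1 - k := by
  have : (N : ℝ) ≤ k := by exact_mod_cast hk
  exact min_eq_right (by linarith)

theorem wt_two_mul_sub {N k : ℕ} (hk : k ≤ 2 * N) : wt N (2 * N - k) = wt N k := by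
  rw [wt, wt, Nat.cast_sub hk, min_comm]
  push_cast
  ring_nf

theorem wt_le_wt_add_sub {N i k : ℕ} (hi : i ≤ N) (hk : k < i) :
    wt N k ≤ wt N (N + 1 + (i - 1 - k)) := by
  rw [wt_of_le (by omega), wt_of_ge (by omega), Nat.cast_add, Nat.cast_sub (by omega),
    Nat.cast_sub (by omega)]
  have : (i : ℝ) ≤ N := by exact_mod_cast hi
  push_cast
  linarith

theorem window_le_window_zero (N : ℕ) {i : ℕ} (hi : i ≤ N) :
    ∑ k ∈ Icc i (i + N), ((wt N k)⁻¹) ^ 2 ≤ ∑ k ∈ Icc 0 (0 + N), ((wt N k)⁻¹) ^ 2 := by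
  rw [← Ico_add_one_right_eq_Icc, ← Ico_add_one_right_eq_Icc, add_assoc, zero_add,
    Nat.Ico_zero_eq_range]
  refine sum_Ico_add_le_sum_range (by omega) fun k hk => ?_
  have hpos : 0 < wt N k := by rw [wt_of_le (by omega)]; positivity
  have hle := wt_le_wt_add_sub hi hk
  exact pow_le_pow_left₀ (inv_nonneg.2 (hpos.trans_le hle).le) (inv_anti₀ hpos hle) 2

theorem window_last_eq_window_zero (N : ℕ) :
    ∑ k ∈ Icc N (N + N), ((wt N k)⁻¹) ^ 2 = ∑ k ∈ Icc 0 (0 + N), ((wt N k)⁻¹) ^ 2 := by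
  have hsym : ∑ k ∈ Icc 0 N, ((wt N (2 * N - k))⁻¹) ^ 2 = ∑ k ∈ Icc 0 N, ((wt N k)⁻¹) ^ 2 :=
    sum_congr rfl fun k hk => by rw [wt_two_mul_sub (by simp at hk; omega)]
  rw [zero_add, ← hsym, sum_Icc_const_sub (fun k => ((wt N k)⁻¹) ^ 2) N.zero_le (by omega),
    two_mul, Nat.add_sub_cancel, Nat.sub_zero]

theorem window_zero_eq (N : ℕ) :
    ∑ k ∈ Icc 0 (0 + N), ((wt N k)⁻¹) ^ 2 = ∑ j ∈ Icc 1 (N + 1), (1 : ℝ) / (j : ℝ) ^ 2 := by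
  rw [zero_add, ← zero_add 1, ← sum_Icc_add_one]
  refine sum_congr rfl fun k hk => ?_
  rw [wt_of_le (mem_Icc.1 hk).2]
  push_cast
  rw [one_div, inv_pow]

theorem cw_eq_window_zero (N : ℕ) : Cw N = ∑ k ∈ Icc 0 (0 + N), ((wt N k)⁻¹) ^ 2 :=
  le_antisymm (sup'_le _ _ fun _ hi => window_le_window_zero N (mem_range_succ_iff.1 hi))
    (le_sup' (fun i => ∑ k ∈ Icc i (i + N), ((wt N k)⁻¹) ^ 2) (mem_range.2 N.succ_pos))

theorem sum_Icc_one_div_sq_lt_pi_sq_div_six (n : ℕ) :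
    ∑ j ∈ Icc 1 n, (1 : ℝ) / (j : ℝ) ^ 2 < Real.pi ^ 2 / 6 :=
  calc ∑ j ∈ Icc 1 n, (1 : ℝ) / (j : ℝ) ^ 2
      < ∑ j ∈ Icc 1 (n + 1), (1 : ℝ) / (j : ℝ) ^ 2 :=
        sum_lt_sum_of_subset (Icc_subset_Icc_right n.le_succ) (i := n + 1) (by simp) (by simp)
          (by positivity) fun _ _ _ => by positivity
    _ ≤ Real.pi ^ 2 / 6 := sum_le_hasSum _ (fun _ _ => by positivity) hasSum_zeta_two

theorem windowed_weight_sum_max_general (N : ℕ) :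
    (∀ i ≤ N, ∑ k ∈ Finset.Icc i (i + N), ((wt N k)⁻¹) ^ 2 ≤
      ∑ k ∈ Finset.Icc 0 (0 + N), ((wt N k)⁻¹) ^ 2) ∧
    (∑ k ∈ Finset.Icc N (N + N), ((wt N k)⁻¹) ^ 2 =
      ∑ k ∈ Finset.Icc 0 (0 + N), ((wt N k)⁻¹) ^ 2) ∧
    Cw N = ∑ j ∈ Finset.Icc 1 (N + 1), (1 : ℝ) / (j : ℝ) ^ 2 ∧
    Cw N < Real.pi ^ 2 / 6 := by
  have hCw : Cw N = ∑ j ∈ Icc 1 (N + 1), (1 : ℝ) / (j : ℝ) ^ 2 :=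
    (cw_eq_window_zero N).trans (window_zero_eq N)
  exact ⟨fun _ hi => window_le_window_zero N hi, window_last_eq_window_zero N, hCw,
    hCw ▸ sum_Icc_one_div_sq_lt_pi_sq_div_six (N + 1)⟩

/-- the maximum of the windowed sums `∑_{k=i}^{i+N} w_k⁻²` over
`0 ≤ i ≤ N` is attained at `i = 0` (and at `i = N`), its value is
`C_w = ∑_{j=1}^{N+1} 1/j²`, and in particular `C_w < π²/6`. -/
theorem windowed_weight_sum_max (N : ℕ) (hN : 0 < N) :
    (∀ i ≤ N, ∑ k ∈ Finset.Icc i (i + N), ((wt N k)⁻¹) ^ 2 ≤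
      ∑ k ∈ Finset.Icc 0 (0 + N), ((wt N k)⁻¹) ^ 2) ∧
    (∑ k ∈ Finset.Icc N (N + N), ((wt N k)⁻¹) ^ 2 =
      ∑ k ∈ Finset.Icc 0 (0 + N), ((wt N k)⁻¹) ^ 2) ∧
    Cw N = ∑ j ∈ Finset.Icc 1 (N + 1), (1 : ℝ) / (j : ℝ) ^ 2 ∧
    Cw N < Real.pi ^ 2 / 6 :=
  windowed_weight_sum_max_general N
end

section
/- Let m, r be positive integers with r ≥ 1, and let U, V ∈ ℂ^{m×r} have orthonormal columns (UᴴU = I_r and VᴴV = I_r). Let W ∈ ℂ^{m×m} satisfy UᴴW = 0 and WV = 0. Then the spectral norm satisfies ‖U Vᴴ + W‖₂ = max(1, ‖W‖₂). In particular, if ‖W‖₂ ≤ 1 then ‖U Vᴴ + W‖₂ = 1. -/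
/-!
Write `A = U Vᴴ`. The hypotheses give `Aᴴ W = 0` and `A Wᴴ = 0`: the two operators have orthogonal
ranges and orthogonal co-ranges. For such a pair `‖A + W‖ = max ‖A‖ ‖W‖`: splitting `x = x₁ + x₂`
with `x₁ ∈ ker A` and `x₂ ⊥ ker A`, the vector `x₂` lies in `ker W`, so
`‖(A + W) x‖² = ‖A x₂‖² + ‖W x₁‖²` by Pythagoras, and Pythagoras once more bounds this by
`max ‖A‖ ‖W‖ ^ 2 * ‖x‖²`. Finally `Aᴴ A = V Vᴴ` is a projection and `A ≠ 0`, so the C⋆-identity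
forces `‖A‖ = 1`.
-/

open Matrix

/-- The spectral norm (largest singular value) of a complex square matrix,
realized as the operator norm of the induced map on `EuclideanSpace`. -/
noncomputable def specNorm {n : ℕ} (M : Matrix (Fin n) (Fin n) ℂ) : ℝ :=
  ‖Matrix.toEuclideanCLM (𝕜 := ℂ) M‖

namespace ContinuousLinearMap

open scoped InnerProductSpace

variable {𝕜 E F : Type*} [RCLike 𝕜]
  [NormedAddCommGroup E] [InnerProductSpace 𝕜 E] [CompleteSpace E]
  [NormedAddCommGroup F] [InnerProductSpace 𝕜 F] [CompleteSpace F]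
  {f g : E →L[𝕜] F}

theorem inner_apply_eq_zero_of_adjoint_comp_eq_zero (h : adjoint f ∘L g = 0) (x y : E) :
    ⟪f x, g y⟫_𝕜 = 0 := by
  rw [← adjoint_inner_right, ← comp_apply, h, _root_.zero_apply, inner_zero_right]

theorem norm_apply_add_apply_sq_of_adjoint_comp_eq_zero (h : adjoint f ∘L g = 0) (x y : E) :
    ‖f x + g y‖ ^ 2 = ‖f x‖ ^ 2 + ‖g y‖ ^ 2 := by
  simpa only [sq] using norm_add_sq_eq_norm_sq_add_norm_sq_of_inner_eq_zero _ _
    (inner_apply_eq_zero_of_adjoint_comp_eq_zero h x y)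

theorem apply_eq_zero_of_mem_orthogonal_ker (h : f ∘L adjoint g = 0) {x : E}
    (hx : x ∈ f.kerᗮ) : g x = 0 := by
  have hker : adjoint g (g x) ∈ f.ker := by
    rw [LinearMap.mem_ker, coe_coe, ← comp_apply, h, _root_.zero_apply]
  rw [← inner_self_eq_zero (𝕜 := 𝕜), ← adjoint_inner_left]
  exact Submodule.inner_right_of_mem_orthogonal hker hx

theorem norm_le_norm_add_of_adjoint_comp_eq_zero (h : adjoint f ∘L g = 0) : ‖g‖ ≤ ‖f + g‖ :=
  opNorm_le_bound _ (norm_nonneg _) fun x ↦ by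
    refine le_trans ?_ ((f + g).le_opNorm x)
    rw [← sq_le_sq₀ (norm_nonneg _) (norm_nonneg _), _root_.add_apply,
      norm_apply_add_apply_sq_of_adjoint_comp_eq_zero h]
    exact le_add_of_nonneg_left (sq_nonneg _)

theorem max_norm_le_norm_add_of_adjoint_comp_eq_zero (h : adjoint f ∘L g = 0) :
    max ‖f‖ ‖g‖ ≤ ‖f + g‖ := by
  have hgf : adjoint g ∘L f = 0 := by
    rw [← adjoint_adjoint (adjoint g ∘L f), adjoint_comp, adjoint_adjoint, h, map_zero]
  exact max_le (add_comm g f ▸ norm_le_norm_add_of_adjoint_comp_eq_zero hgf)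
    (norm_le_norm_add_of_adjoint_comp_eq_zero h)

theorem norm_add_le_max_of_adjoint_comp_eq_zero (h : adjoint f ∘L g = 0)
    (h' : f ∘L adjoint g = 0) : ‖f + g‖ ≤ max ‖f‖ ‖g‖ := by
  have : CompleteSpace f.ker := f.isClosed_ker.completeSpace_coe
  set M := max ‖f‖ ‖g‖
  refine opNorm_le_bound _ (le_max_of_le_left (norm_nonneg f)) fun x ↦ ?_
  set x₁ := f.ker.starProjection x
  set x₂ := f.kerᗮ.starProjection x
  have hx : x = x₁ + x₂ := (Submodule.starProjection_add_starProjection_orthogonal x).symm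
  have hf : f x = f x₂ := by
    have hx₁ : f x₁ = 0 := f.ker.starProjection_apply_mem x
    rw [hx, map_add, hx₁, zero_add]
  have hg : g x = g x₁ := by
    rw [hx, map_add, apply_eq_zero_of_mem_orthogonal_ker h' (f.kerᗮ.starProjection_apply_mem x),
      add_zero]
  have hbound : ∀ {k : E →L[𝕜] F} (y : E), ‖k‖ ≤ M → ‖k y‖ ^ 2 ≤ M ^ 2 * ‖y‖ ^ 2 := by
    intro k y hk
    rw [← mul_pow]
    exact pow_le_pow_left₀ (norm_nonneg _) ((k.le_opNorm y).trans (by gcongr)) 2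
  rw [← sq_le_sq₀ (norm_nonneg _) (by positivity), _root_.add_apply,
    norm_apply_add_apply_sq_of_adjoint_comp_eq_zero h, mul_pow,
    Submodule.norm_sq_eq_add_norm_sq_starProjection x f.ker, hf, hg]
  linarith [hbound x₁ (le_max_right ‖f‖ ‖g‖), hbound x₂ (le_max_left ‖f‖ ‖g‖)]

theorem norm_add_eq_max_of_adjoint_comp_eq_zero (h : adjoint f ∘L g = 0)
    (h' : f ∘L adjoint g = 0) : ‖f + g‖ = max ‖f‖ ‖g‖ :=
  le_antisymm (norm_add_le_max_of_adjoint_comp_eq_zero h h')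
    (max_norm_le_norm_add_of_adjoint_comp_eq_zero h)

end ContinuousLinearMap

theorem CStarRing.norm_eq_one_of_isStarProjection_star_mul_self {A : Type*}
    [NonUnitalNormedRing A] [StarRing A] [CStarRing A] {a : A} (ha : a ≠ 0)
    (h : IsStarProjection (star a * a)) : ‖a‖ = 1 := by
  have hsq : ‖star a * a‖ = ‖a‖ ^ 2 := by rw [sq, CStarRing.norm_star_mul_self]
  have hidem : ‖a‖ ^ 2 * ‖a‖ ^ 2 = ‖a‖ ^ 2 * 1 := by
    rw [mul_one, ← sq, ← hsq, ← h.isSelfAdjoint.norm_mul_self, h.isIdempotentElem.eq]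
  have hsq_one : ‖a‖ ^ 2 = 1 :=
    mul_left_cancel₀ (pow_ne_zero 2 (norm_ne_zero_iff.mpr ha)) hidem
  exact (pow_eq_one_iff_of_nonneg (norm_nonneg a) two_ne_zero).mp hsq_one

namespace Matrix

theorem isStarProjection_mul_conjTranspose {m n α : Type*} [Fintype n] [DecidableEq n]
    [Fintype m] [Semiring α] [StarRing α] {V : Matrix m n α} (hV : Vᴴ * V = 1) :
    IsStarProjection (V * Vᴴ) where
  isIdempotentElem := by
    rw [IsIdempotentElem, Matrix.mul_assoc, ← Matrix.mul_assoc Vᴴ, hV, Matrix.one_mul]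
  isSelfAdjoint := by
    rw [IsSelfAdjoint, star_eq_conjTranspose, conjTranspose_mul, conjTranspose_conjTranspose]

theorem adjoint_toEuclideanCLM {n : Type*} [Fintype n] [DecidableEq n] (A : Matrix n n ℂ) :
    ContinuousLinearMap.adjoint (toEuclideanCLM (𝕜 := ℂ) A) = toEuclideanCLM (𝕜 := ℂ) Aᴴ := by
  rw [← ContinuousLinearMap.star_eq_adjoint, ← map_star, star_eq_conjTranspose]

end Matrix

theorem specNorm_add_eq_max {n : ℕ} {A B : Matrix (Fin n) (Fin n) ℂ} (h : Aᴴ * B = 0)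
    (h' : A * Bᴴ = 0) : specNorm (A + B) = max (specNorm A) (specNorm B) := by
  refine (congrArg norm (map_add _ A B)).trans
    (ContinuousLinearMap.norm_add_eq_max_of_adjoint_comp_eq_zero ?_ ?_)
  · rw [adjoint_toEuclideanCLM, ← ContinuousLinearMap.mul_def, ← map_mul, h, map_zero]
  · rw [adjoint_toEuclideanCLM, ← ContinuousLinearMap.mul_def, ← map_mul, h', map_zero]

theorem specNorm_eq_one_of_isStarProjection {n : ℕ} {A : Matrix (Fin n) (Fin n) ℂ} (hA : A ≠ 0)
    (h : IsStarProjection (Aᴴ * A)) : specNorm A = 1 := by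
  refine CStarRing.norm_eq_one_of_isStarProjection_star_mul_self
    (EmbeddingLike.map_ne_zero_iff.mpr hA) ?_
  rw [← map_star, ← map_mul]
  exact h.map _

theorem specNorm_subgradient_form_general (m r : ℕ) (hr : 1 ≤ r)
    (U V : Matrix (Fin m) (Fin r) ℂ) (W : Matrix (Fin m) (Fin m) ℂ)
    (hU : Uᴴ * U = 1) (hV : Vᴴ * V = 1)
    (hUW : Uᴴ * W = 0) (hWV : W * V = 0) :
    specNorm (U * Vᴴ + W) = max 1 (specNorm W) ∧
      (specNorm W ≤ 1 → specNorm (U * Vᴴ + W) = 1) := by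
  have : NeZero r := ⟨Nat.one_le_iff_ne_zero.mp hr⟩
  have hUV_ne : U * Vᴴ ≠ 0 := fun h0 ↦ one_ne_zero <|
    calc (1 : Matrix (Fin r) (Fin r) ℂ) = Uᴴ * U * (Vᴴ * V) := by rw [hU, hV, Matrix.one_mul]
      _ = Uᴴ * (U * Vᴴ) * V := by simp only [Matrix.mul_assoc]
      _ = 0 := by rw [h0, Matrix.mul_zero, Matrix.zero_mul]
  have hstar : (U * Vᴴ)ᴴ * (U * Vᴴ) = V * Vᴴ := by
    rw [conjTranspose_mul, conjTranspose_conjTranspose, Matrix.mul_assoc,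
      ← Matrix.mul_assoc Uᴴ, hU, Matrix.one_mul]
  have hnorm : specNorm (U * Vᴴ) = 1 :=
    specNorm_eq_one_of_isStarProjection hUV_ne (hstar ▸ isStarProjection_mul_conjTranspose hV)
  have hsum : specNorm (U * Vᴴ + W) = max 1 (specNorm W) := by
    rw [← hnorm]
    refine specNorm_add_eq_max ?_ ?_
    · rw [conjTranspose_mul, conjTranspose_conjTranspose, Matrix.mul_assoc, hUW, Matrix.mul_zero]
    · rw [Matrix.mul_assoc, ← conjTranspose_mul, hWV, conjTranspose_zero, Matrix.mul_zero]
  exact ⟨hsum, fun hW ↦ hsum.trans (max_eq_left hW)⟩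

/-- if `U, V ∈ ℂ^{m×r}` have orthonormal columns and
`W ∈ ℂ^{m×m}` satisfies `UᴴW = 0` and `WV = 0`, then
`‖U Vᴴ + W‖₂ = max(1, ‖W‖₂)`; in particular if `‖W‖₂ ≤ 1` then `‖U Vᴴ + W‖₂ = 1`. -/
theorem specNorm_subgradient_form (m r : ℕ) (hm : 0 < m) (hr : 1 ≤ r)
    (U V : Matrix (Fin m) (Fin r) ℂ) (W : Matrix (Fin m) (Fin m) ℂ)
    (hU : Uᴴ * U = 1) (hV : Vᴴ * V = 1)
    (hUW : Uᴴ * W = 0) (hWV : W * V = 0) :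
    specNorm (U * Vᴴ + W) = max 1 (specNorm W) ∧
      (specNorm W ≤ 1 → specNorm (U * Vᴴ + W) = 1) :=
  specNorm_subgradient_form_general m r hr U V W hU hV hUW hWV
end
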